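/- arXiv:1902.01462 — 5 statements merged into one kernel-verified Lean document; each statement's English description precedes it below -/
import Mathlib

section
/- The initial value problem v̇ ∈ −U(v), v(0) = v₀ has a unique solution on any compact interval [0,T]: any two absolutely continuous functions on [0,T] with v(0) = v₀ and v̇(t) ∈ −U(v(t)) a.e. are equal. -/
open MeasureTheory Set

open scoped Classical in
/-- The set-valued unit direction function. -/
noncomputable def unitDir {n : ℕ} (v : EuclideanSpace ℝ (Fin n)) :
    Set (EuclideanSpace ℝ (Fin n)) :=
  if v = 0 then Metric.closedBall 0 1 else {‖v‖⁻¹ • v}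

/-- `v` is an (absolutely continuous) solution of the differential inclusion
`v̇ ∈ D(v)` on the compact interval `[a,b]`, in integral form. -/
def IsSolOn {n : ℕ} (D : EuclideanSpace ℝ (Fin n) → Set (EuclideanSpace ℝ (Fin n)))
    (a b : ℝ) (v : ℝ → EuclideanSpace ℝ (Fin n)) : Prop :=
  ∃ v' : ℝ → EuclideanSpace ℝ (Fin n),
    IntegrableOn v' (Icc a b) ∧
    (∀ᵐ t ∂(volume.restrict (Icc a b)), v' t ∈ D (v t)) ∧
    ∀ t ∈ Icc a b, v t = v a + ∫ s in a..t, v' s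

open scoped RealInnerProductSpace

section Aux

variable {E : Type*} [NormedAddCommGroup E] [InnerProductSpace ℝ E] [CompleteSpace E]

/-- Key property of the unit direction set: every element has norm at most one and has
inner product with the base point equal to its norm. -/
lemma unitDir_prop {n : ℕ} {x a : EuclideanSpace ℝ (Fin n)} (ha : a ∈ unitDir x) :
    ‖a‖ ≤ 1 ∧ ⟪a, x⟫ = ‖x‖ := by
  by_cases hx : x = 0
  · rw [unitDir, if_pos hx] at ha
    simp only [Metric.mem_closedBall, dist_zero_right] at ha
    exact ⟨ha, by simp [hx]⟩
  · rw [unitDir, if_neg hx] at ha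
    rw [mem_singleton_iff] at ha
    subst ha
    constructor
    · rw [norm_smul, norm_inv, norm_norm, inv_mul_cancel₀ (norm_ne_zero_iff.2 hx)]
    · rw [real_inner_smul_left, real_inner_self_eq_norm_mul_norm,
        inv_mul_cancel_left₀ (norm_ne_zero_iff.2 hx)]

/-- Monotonicity: elements of the unit direction sets satisfy the monotone inequality. -/
lemma unitDir_monotone {n : ℕ} {x y p q : EuclideanSpace ℝ (Fin n)}
    (hp : p ∈ unitDir x) (hq : q ∈ unitDir y) :
    ⟪q - p, x - y⟫ ≤ 0 := by
  obtain ⟨hp1, hp2⟩ := unitDir_prop hp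
  obtain ⟨hq1, hq2⟩ := unitDir_prop hq
  have h1 : ⟪q, x⟫ ≤ ‖x‖ := by
    calc ⟪q, x⟫ ≤ ‖q‖ * ‖x‖ := real_inner_le_norm q x
    _ ≤ 1 * ‖x‖ := by gcongr
    _ = ‖x‖ := one_mul _
  have h2 : ⟪p, y⟫ ≤ ‖y‖ := by
    calc ⟪p, y⟫ ≤ ‖p‖ * ‖y‖ := real_inner_le_norm p y
    _ ≤ 1 * ‖y‖ := by gcongr
    _ = ‖y‖ := one_mul _
  have : ⟪q - p, x - y⟫ = ⟪q, x⟫ - ⟪q, y⟫ - ⟪p, x⟫ + ⟪p, y⟫ := by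
    rw [inner_sub_left, inner_sub_right, inner_sub_right]; ring
  rw [this, hq2, hp2]
  linarith

/-- Energy identity: the squared norm of a primitive equals twice the integral of the
inner product of the integrand with the primitive. -/
lemma energy_identity (f : ℝ → E) (t : ℝ) (hf : IntegrableOn f (Ioc 0 t)) :
    ⟪∫ u in Ioc 0 t, f u, ∫ u in Ioc 0 t, f u⟫ =
      2 * ∫ u in Ioc 0 t, ⟪f u, ∫ s in Ioc 0 u, f s⟫ := by
  set μ : Measure ℝ := volume.restrict (Ioc 0 t) with hμ
  have hfμ : Integrable f μ := hf
  set F : ℝ → E := fun u => ∫ s in Ioc 0 u, f s with hF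
  set g : ℝ × ℝ → ℝ := fun p => ⟪f p.1, f p.2⟫ with hg
  -- measurability and integrability of g on the product
  have hgm : AEStronglyMeasurable g (μ.prod μ) := by
    rw [hg]; exact (hfμ.aestronglyMeasurable.comp_fst).inner (hfμ.aestronglyMeasurable.comp_snd)
  have hgi : Integrable g (μ.prod μ) := by
    refine Integrable.mono' (hfμ.norm.mul_prod hfμ.norm) hgm ?_
    filter_upwards with p
    simpa using abs_real_inner_le_norm (f p.1) (f p.2)
  -- step 1: double integral representation
  have h1 : ⟪∫ u, f u ∂μ, ∫ u, f u ∂μ⟫ = ∫ p, g p ∂(μ.prod μ) := by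
    rw [← integral_inner hfμ]
    have : ∀ u, ⟪∫ s, f s ∂μ, f u⟫ = ∫ s, g (u, s) ∂μ := by
      intro u
      rw [real_inner_comm, ← integral_inner hfμ]
    calc ∫ u, ⟪∫ s, f s ∂μ, f u⟫ ∂μ = ∫ u, ∫ s, g (u, s) ∂μ ∂μ := by
          exact integral_congr_ae (Filter.Eventually.of_forall this)
      _ = ∫ p, g p ∂(μ.prod μ) := (integral_prod g hgi).symm
  -- the lower triangle
  set A : Set (ℝ × ℝ) := {p | p.2 ≤ p.1} with hA
  have hAm : MeasurableSet A := measurableSet_le measurable_snd measurable_fst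
  set B : Set (ℝ × ℝ) := {p | p.2 < p.1} with hB
  have hBm : MeasurableSet B := measurableSet_lt measurable_snd measurable_fst
  -- the complement of A maps to B under swap
  have hswap : ∫ p in Aᶜ, g p ∂(μ.prod μ) = ∫ p in B, g p ∂(μ.prod μ) := by
    have hpre : Prod.swap ⁻¹' B = Aᶜ := by
      ext p; simp [hA, hB, not_le]
    have := (Measure.measurePreserving_swap (μ := μ) (ν := μ)).setIntegral_preimage_emb
      MeasurableEquiv.prodComm.measurableEmbedding g B
    rw [hpre] at this
    rw [← this]
    refine setIntegral_congr_fun hAm.compl fun p _ => ?_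
    simp only [g, Prod.fst_swap, Prod.snd_swap]
    exact real_inner_comm _ _
  -- computing the triangle integrals
  have key : ∀ (S : ℝ → Set ℝ), (∀ u, MeasurableSet (S u)) →
      ((S = fun u => Iic u) ∨ S = fun u => Iio u) →
      (∀ᵐ u ∂μ, ∫ s in S u, g (u, s) ∂μ = ⟪f u, F u⟫) := by
    intro S hSm hS
    filter_upwards [ae_restrict_mem measurableSet_Ioc] with u hu
    have hrestr : μ.restrict (S u) = volume.restrict (S u ∩ Ioc 0 t) := by
      rw [hμ, Measure.restrict_restrict (hSm u)]
    have hFu : ∫ s in S u ∩ Ioc 0 t, g (u, s) = ⟪f u, F u⟫ := by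
      have hsub : S u ∩ Ioc 0 t ⊆ Ioc 0 t := inter_subset_right
      rcases hS with hS | hS
      · have hset : S u ∩ Ioc 0 t = Ioc 0 u := by
          rw [hS]
          ext s
          simp only [mem_inter_iff, mem_Iic, mem_Ioc]
          exact ⟨fun ⟨h1, h2, _⟩ => ⟨h2, h1⟩, fun ⟨h1, h2⟩ => ⟨h2, h1, h2.trans hu.2⟩⟩
        rw [hset, hF]
        exact integral_inner (hf.mono_set (Ioc_subset_Ioc_right hu.2)) (f u)
      · have hset : S u ∩ Ioc 0 t = Ioo 0 u := by
          rw [hS]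
          ext s
          simp only [mem_inter_iff, mem_Iio, mem_Ioo, mem_Ioc]
          exact ⟨fun ⟨h1, h2, _⟩ => ⟨h2, h1⟩, fun ⟨h1, h2⟩ => ⟨h2, h1, h2.le.trans hu.2⟩⟩
        rw [hset, ← integral_Ioc_eq_integral_Ioo, hF]
        exact integral_inner (hf.mono_set (Ioc_subset_Ioc_right hu.2)) (f u)
    rw [hrestr, hFu]
  -- triangle integral equals the desired quantity (for both A and B)
  have hAint : ∫ p in A, g p ∂(μ.prod μ) = ∫ u, ⟪f u, F u⟫ ∂μ := by
    have hind : Integrable (A.indicator g) (μ.prod μ) := hgi.indicator hAm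
    rw [← integral_indicator hAm, integral_prod _ hind]
    refine integral_congr_ae ?_
    filter_upwards [key (fun u => Iic u) (fun u => measurableSet_Iic) (Or.inl rfl)] with u hu
    rw [← hu, ← integral_indicator measurableSet_Iic]
    refine integral_congr_ae (Filter.Eventually.of_forall fun s => ?_)
    by_cases hs : s ≤ u <;> simp [hA, Set.indicator_apply, hs]
  have hBint : ∫ p in B, g p ∂(μ.prod μ) = ∫ u, ⟪f u, F u⟫ ∂μ := by
    have hind : Integrable (B.indicator g) (μ.prod μ) := hgi.indicator hBm
    rw [← integral_indicator hBm, integral_prod _ hind]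
    refine integral_congr_ae ?_
    filter_upwards [key (fun u => Iio u) (fun u => measurableSet_Iio) (Or.inr rfl)] with u hu
    rw [← hu, ← integral_indicator measurableSet_Iio]
    refine integral_congr_ae (Filter.Eventually.of_forall fun s => ?_)
    by_cases hs : s < u <;> simp [hB, Set.indicator_apply, hs]
  calc ⟪∫ u, f u ∂μ, ∫ u, f u ∂μ⟫ = ∫ p, g p ∂(μ.prod μ) := h1
    _ = ∫ p in A, g p ∂(μ.prod μ) + ∫ p in Aᶜ, g p ∂(μ.prod μ) := (integral_add_compl hAm hgi).symm
    _ = ∫ u, ⟪f u, F u⟫ ∂μ + ∫ u, ⟪f u, F u⟫ ∂μ := by rw [hswap, hAint, hBint]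
    _ = 2 * ∫ u, ⟪f u, F u⟫ ∂μ := by ring

end Aux

/-- Uniqueness for the initial value problem `v̇ ∈ -U(v)`, `v(0) = v₀`:
any two solutions on `[0,T]` with the same initial condition coincide. -/
theorem ivp_neg_unitDir_unique {n : ℕ} (v₀ : EuclideanSpace ℝ (Fin n)) (T : ℝ) (hT : 0 < T)
    (v w : ℝ → EuclideanSpace ℝ (Fin n))
    (hv : IsSolOn (fun u => -(unitDir u)) 0 T v)
    (hw : IsSolOn (fun u => -(unitDir u)) 0 T w)
    (hv0 : v 0 = v₀) (hw0 : w 0 = v₀) :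
    ∀ t ∈ Icc (0 : ℝ) T, v t = w t := by
  obtain ⟨v', hv'int, hv'mem, hvrep⟩ := hv
  obtain ⟨w', hw'int, hw'mem, hwrep⟩ := hw
  set f : ℝ → EuclideanSpace ℝ (Fin n) := fun s => v' s - w' s with hf
  have hfint : IntegrableOn f (Icc 0 T) := hv'int.sub hw'int
  -- the difference equals the primitive of f
  have hdiff : ∀ t ∈ Icc (0 : ℝ) T, v t - w t = ∫ s in Ioc 0 t, f s := by
    intro t ht
    have hvI : IntervalIntegrable v' volume 0 t :=
      (hv'int.mono_set (by rw [uIcc_of_le ht.1]; exact Icc_subset_Icc_right ht.2)).intervalIntegrable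
    have hwI : IntervalIntegrable w' volume 0 t :=
      (hw'int.mono_set (by rw [uIcc_of_le ht.1]; exact Icc_subset_Icc_right ht.2)).intervalIntegrable
    rw [hvrep t ht, hwrep t ht, hv0, hw0]
    have hsubI : ∫ s in (0:ℝ)..t, f s
        = (∫ s in (0:ℝ)..t, v' s) - ∫ s in (0:ℝ)..t, w' s :=
      intervalIntegral.integral_sub hvI hwI
    rw [← intervalIntegral.integral_of_le ht.1, hsubI]
    abel
  -- a.e. dissipativity
  have hdissip : ∀ᵐ s ∂(volume.restrict (Icc (0:ℝ) T)), ⟪f s, v s - w s⟫ ≤ 0 := by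
    filter_upwards [hv'mem, hw'mem] with s hvs hws
    rw [Set.mem_neg] at hvs hws
    have : f s = -(w' s) - -(v' s) := by simp [hf]; abel
    rw [this]
    exact unitDir_monotone hvs hws
  intro t ht
  have hsub : Ioc (0:ℝ) t ⊆ Icc 0 T := fun s hs => ⟨hs.1.le, hs.2.trans ht.2⟩
  have hfloc : IntegrableOn f (Ioc 0 t) := hfint.mono_set hsub
  have hFs : ∀ᵐ u ∂(volume.restrict (Ioc (0:ℝ) t)),
      ⟪f u, ∫ s in Ioc 0 u, f s⟫ = ⟪f u, v u - w u⟫ := by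
    filter_upwards [ae_restrict_mem measurableSet_Ioc] with u hu
    rw [← hdiff u ⟨hu.1.le, hu.2.trans ht.2⟩]
  have hkey : ⟪v t - w t, v t - w t⟫ ≤ 0 := by
    rw [hdiff t ht, energy_identity f t hfloc]
    have hle : ∫ u in Ioc 0 t, ⟪f u, ∫ s in Ioc 0 u, f s⟫ ≤ 0 := by
      refine integral_nonpos_of_ae ?_
      have hmono : ∀ᵐ u ∂(volume.restrict (Ioc (0:ℝ) t)), ⟪f u, v u - w u⟫ ≤ 0 :=
        ae_restrict_of_ae_restrict_of_subset hsub hdissip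
      filter_upwards [hFs, hmono] with u h1 h2
      rw [h1]; exact h2
    linarith
  have := le_antisymm hkey (real_inner_self_nonneg)
  have hz : v t - w t = 0 := by
    rwa [← inner_self_eq_zero (𝕜 := ℝ)]
  exact sub_eq_zero.mp hz
end

section
/- (Dissipation) Let J_N ∈ ℝ^{m×n}, J_T ∈ ℝ^{2k×n}, and suppose v : I → ℝⁿ is absolutely continuous with v̇(s) = J_Nᵀλ_N(s) + J_Tᵀλ_T(s) a.e., where λ_N(s) ≥ 0 componentwise, λ_{N,i}(s)·(J_N v(s))_i ≤ 0 for each contact i, and for each frictional contact j, λ_{T,j}(s) ∈ −μ_j λ_{N,j}(s) U(J_{T,j} v(s)) with μ_j ≥ 0. Then ‖v(s)‖ is non-increasing on I. -/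
open MeasureTheory Set ContinuousLinearMap

open scoped RealInnerProductSpace

section Aux

variable {E : Type*} [NormedAddCommGroup E] [InnerProductSpace ℝ E] [CompleteSpace E]

lemma integrable_inner_prod_aux (f : ℝ → E) {s t : ℝ} (hf : IntegrableOn f (Ioc s t)) :
    Integrable (fun p : ℝ × ℝ => ⟪f p.1, f p.2⟫)
      ((volume.restrict (Ioc s t)).prod (volume.restrict (Ioc s t))) := by
  have h1 : AEStronglyMeasurable (fun p : ℝ × ℝ => f p.1)
      ((volume.restrict (Ioc s t)).prod (volume.restrict (Ioc s t))) :=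
    hf.aestronglyMeasurable.comp_quasiMeasurePreserving
      Measure.quasiMeasurePreserving_fst
  have h2 : AEStronglyMeasurable (fun p : ℝ × ℝ => f p.2)
      ((volume.restrict (Ioc s t)).prod (volume.restrict (Ioc s t))) :=
    hf.aestronglyMeasurable.comp_quasiMeasurePreserving
      Measure.quasiMeasurePreserving_snd
  refine (Integrable.mul_prod hf.norm hf.norm).mono' (h1.inner h2) ?_
  filter_upwards with p
  exact norm_inner_le_norm _ _

lemma swap_aux (f : ℝ → E) {s t : ℝ} (hf : IntegrableOn f (Ioc s t)) :
    ∫ r in Ioc s t, ∫ u in Ioc r t, ⟪f r, f u⟫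
      = ∫ r in Ioc s t, ∫ u in Ioc s r, ⟪f r, f u⟫ := by
  set G : ℝ × ℝ → ℝ :=
    fun p => {q : ℝ × ℝ | q.1 < q.2}.indicator (fun q => ⟪f q.1, f q.2⟫) p with hGdef
  have hGmeas : MeasurableSet {q : ℝ × ℝ | q.1 < q.2} :=
    measurableSet_lt measurable_fst measurable_snd
  have hG : Integrable G ((volume.restrict (Ioc s t)).prod (volume.restrict (Ioc s t))) :=
    (integrable_inner_prod_aux f hf).indicator hGmeas
  have key1 : ∫ r in Ioc s t, ∫ u in Ioc r t, ⟪f r, f u⟫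
      = ∫ r in Ioc s t, ∫ u in Ioc s t, G (r, u) := by
    refine setIntegral_congr_fun measurableSet_Ioc fun r hr => ?_
    have h1 : (fun u => G (r, u)) = (Ioi r).indicator (fun u => ⟪f r, f u⟫) := by
      ext u
      by_cases h : r < u <;> simp [hGdef, indicator, h, mem_Ioi, Set.mem_setOf_eq]
    rw [h1, setIntegral_indicator measurableSet_Ioi, Ioc_inter_Ioi,
      sup_eq_right.mpr hr.1.le]
  have key2 : ∫ r in Ioc s t, ∫ u in Ioc s r, ⟪f r, f u⟫
      = ∫ u in Ioc s t, ∫ r in Ioc s t, G (r, u) := by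
    refine setIntegral_congr_fun measurableSet_Ioc fun x hx => ?_
    have hset : Ioc s t ∩ Iio x = Ioo s x := by
      ext y
      simp only [mem_inter_iff, mem_Ioc, mem_Iio, mem_Ioo]
      constructor
      · rintro ⟨⟨h1, _⟩, h3⟩; exact ⟨h1, h3⟩
      · rintro ⟨h1, h3⟩; exact ⟨⟨h1, le_trans h3.le hx.2⟩, h3⟩
    have h1 : (fun y => G (y, x)) = (Iio x).indicator (fun y => ⟪f x, f y⟫) := by
      ext y
      by_cases h : y < x <;>
        simp [hGdef, indicator, h, mem_Iio, Set.mem_setOf_eq, real_inner_comm]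
    rw [h1, setIntegral_indicator measurableSet_Iio, hset, ← integral_Ioc_eq_integral_Ioo]
  have hswap : ∫ r in Ioc s t, ∫ u in Ioc s t, G (r, u)
      = ∫ u in Ioc s t, ∫ r in Ioc s t, G (r, u) := by
    apply integral_integral_swap
    exact hG
  exact key1.trans (hswap.trans key2.symm)

/-- The key energy identity for a function given as a primitive. -/
lemma norm_sq_primitive (f : ℝ → E) (c : E) {s t : ℝ} (hst : s ≤ t)
    (hf : IntegrableOn f (Ioc s t)) :
    ‖c + ∫ u in Ioc s t, f u‖ ^ 2
      = ‖c‖ ^ 2 + 2 * ∫ r in Ioc s t, ⟪f r, c + ∫ u in Ioc s r, f u⟫ := by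
  set I := ∫ u in Ioc s t, f u with hI
  have hC : ∀ c₀ : E, Integrable (fun r => ⟪f r, c₀⟫) (volume.restrict (Ioc s t)) := by
    intro c₀
    refine (hf.norm.mul_const ‖c₀‖).mono' (hf.aestronglyMeasurable.inner
      aestronglyMeasurable_const) ?_
    filter_upwards with r
    exact norm_inner_le_norm _ _
  have hIcc : IntegrableOn f (Icc s t) := by
    rwa [integrableOn_Icc_iff_integrableOn_Ioc]
  have hcont : ContinuousOn (fun x => ∫ u in Ioc s x, f u) (Icc s t) :=
    intervalIntegral.continuousOn_primitive hIcc
  have hprim_meas : AEStronglyMeasurable (fun x => ∫ u in Ioc s x, f u)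
      (volume.restrict (Ioc s t)) :=
    (hcont.mono Ioc_subset_Icc_self).aestronglyMeasurable measurableSet_Ioc
  have hprim_bd : ∀ r ∈ Ioc s t, ‖∫ u in Ioc s r, f u‖ ≤ ∫ u in Ioc s t, ‖f u‖ := by
    intro r hr
    calc ‖∫ u in Ioc s r, f u‖ ≤ ∫ u in Ioc s r, ‖f u‖ := norm_integral_le_integral_norm _
      _ ≤ ∫ u in Ioc s t, ‖f u‖ := by
          refine setIntegral_mono_set hf.norm
            (Filter.Eventually.of_forall fun u => norm_nonneg _) ?_
          exact HasSubset.Subset.eventuallyLE (Ioc_subset_Ioc le_rfl hr.2)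
  have hg2 : Integrable (fun r => ⟪f r, ∫ u in Ioc s r, f u⟫)
      (volume.restrict (Ioc s t)) := by
    refine (hf.norm.mul_const (∫ u in Ioc s t, ‖f u‖)).mono'
      (hf.aestronglyMeasurable.inner hprim_meas) ?_
    filter_upwards [ae_restrict_mem measurableSet_Ioc] with r hr
    calc ‖⟪f r, ∫ u in Ioc s r, f u⟫‖
        ≤ ‖f r‖ * ‖∫ u in Ioc s r, f u‖ := norm_inner_le_norm _ _
      _ ≤ ‖f r‖ * ∫ u in Ioc s t, ‖f u‖ :=
          mul_le_mul_of_nonneg_left (hprim_bd r hr) (norm_nonneg _)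
  have hsplit : ∀ r ∈ Ioc s t,
      ⟪f r, I⟫ = ⟪f r, ∫ u in Ioc s r, f u⟫ + ⟪f r, ∫ u in Ioc r t, f u⟫ := by
    intro r hr
    rw [← inner_add_right, ← setIntegral_union (Ioc_disjoint_Ioc_of_le le_rfl) measurableSet_Ioc
      (hf.mono_set (Ioc_subset_Ioc le_rfl hr.2)) (hf.mono_set (Ioc_subset_Ioc hr.1.le le_rfl)),
      Ioc_union_Ioc_eq_Ioc hr.1.le hr.2]
  have hIone : Integrable (fun r => ⟪f r, I⟫) (volume.restrict (Ioc s t)) := hC I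
  have hg3 : Integrable (fun r => ⟪f r, ∫ u in Ioc r t, f u⟫)
      (volume.restrict (Ioc s t)) := by
    have h : (fun r => ⟪f r, ∫ u in Ioc r t, f u⟫)
        =ᵐ[volume.restrict (Ioc s t)]
        fun r => ⟪f r, I⟫ - ⟪f r, ∫ u in Ioc s r, f u⟫ := by
      filter_upwards [ae_restrict_mem measurableSet_Ioc] with r hr
      rw [hsplit r hr]; ring
    exact (hIone.sub hg2).congr h.symm
  have e1 : ∫ r in Ioc s t, ⟪f r, I⟫ = ‖I‖ ^ 2 := by
    have h : ∀ r, ⟪f r, I⟫ = ⟪I, f r⟫ := fun r => real_inner_comm _ _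
    simp_rw [h]
    rw [integral_inner hf I, ← hI, real_inner_self_eq_norm_sq]
  have e2 : ∫ r in Ioc s t, ⟪f r, ∫ u in Ioc s r, f u⟫
      = ∫ r in Ioc s t, ⟪f r, ∫ u in Ioc r t, f u⟫ := by
    have l1 : ∫ r in Ioc s t, ⟪f r, ∫ u in Ioc s r, f u⟫
        = ∫ r in Ioc s t, ∫ u in Ioc s r, ⟪f r, f u⟫ :=
      setIntegral_congr_fun measurableSet_Ioc fun r hr =>
        (integral_inner (hf.mono_set (Ioc_subset_Ioc le_rfl hr.2)) (f r)).symm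
    have l2 : ∫ r in Ioc s t, ⟪f r, ∫ u in Ioc r t, f u⟫
        = ∫ r in Ioc s t, ∫ u in Ioc r t, ⟪f r, f u⟫ :=
      setIntegral_congr_fun measurableSet_Ioc fun r hr =>
        (integral_inner (hf.mono_set (Ioc_subset_Ioc hr.1.le le_rfl)) (f r)).symm
    rw [l1, l2, swap_aux f hf]
  have esum : ∫ r in Ioc s t, ⟪f r, I⟫
      = (∫ r in Ioc s t, ⟪f r, ∫ u in Ioc s r, f u⟫)
        + ∫ r in Ioc s t, ⟪f r, ∫ u in Ioc r t, f u⟫ := by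
    rw [← integral_add hg2 hg3]
    exact setIntegral_congr_fun measurableSet_Ioc fun r hr => hsplit r hr
  have e3 : ‖I‖ ^ 2 = 2 * ∫ r in Ioc s t, ⟪f r, ∫ u in Ioc s r, f u⟫ := by
    rw [← e1, esum, ← e2]; ring
  have hCint : ∫ r in Ioc s t, ⟪f r, c⟫ = ⟪c, I⟫ := by
    have h : ∀ r, ⟪f r, c⟫ = ⟪c, f r⟫ := fun r => real_inner_comm _ _
    simp_rw [h]
    exact integral_inner hf c
  have hsplit2 : ∫ r in Ioc s t, ⟪f r, c + ∫ u in Ioc s r, f u⟫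
      = (∫ r in Ioc s t, ⟪f r, c⟫)
        + ∫ r in Ioc s t, ⟪f r, ∫ u in Ioc s r, f u⟫ := by
    rw [← integral_add (hC c) hg2]
    refine setIntegral_congr_fun measurableSet_Ioc fun r _ => ?_
    exact inner_add_right _ _ _
  rw [norm_add_sq_real, hsplit2, hCint]
  linarith [e3]

end Aux

/-- Dissipation: along any absolutely continuous trajectory driven by contact
forces satisfying the normal complementarity conditions and Coulomb friction,
the velocity norm is non-increasing. -/
theorem norm_nonincreasing_of_dissipative {n m k : ℕ}
    (Jn : EuclideanSpace ℝ (Fin n) →L[ℝ] EuclideanSpace ℝ (Fin m))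
    (Jt : Fin k → (EuclideanSpace ℝ (Fin n) →L[ℝ] EuclideanSpace ℝ (Fin 2)))
    (hkm : k ≤ m) (μ : Fin k → ℝ) (hμ : ∀ j, 0 ≤ μ j)
    (a b : ℝ) (hab : a ≤ b)
    (v v' : ℝ → EuclideanSpace ℝ (Fin n))
    (lamN : ℝ → EuclideanSpace ℝ (Fin m))
    (lamT : ℝ → Fin k → EuclideanSpace ℝ (Fin 2))
    (hint : IntegrableOn v' (Icc a b))
    (hAC : ∀ t ∈ Icc a b, v t = v a + ∫ s in a..t, v' s)
    (hdyn : ∀ᵐ s ∂(volume.restrict (Icc a b)),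
      v' s = ContinuousLinearMap.adjoint Jn (lamN s)
             + ∑ j : Fin k, ContinuousLinearMap.adjoint (Jt j) (lamT s j))
    (hpos : ∀ᵐ s ∂(volume.restrict (Icc a b)), ∀ i : Fin m, 0 ≤ lamN s i)
    (hcomp : ∀ᵐ s ∂(volume.restrict (Icc a b)),
      ∀ i : Fin m, lamN s i * (Jn (v s)) i ≤ 0)
    (hfric : ∀ᵐ s ∂(volume.restrict (Icc a b)),
      ∀ j : Fin k, ∃ u ∈ unitDir ((Jt j) (v s)),
        lamT s j = -(μ j * lamN s (Fin.castLE hkm j)) • u) :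
    ∀ s ∈ Icc a b, ∀ t ∈ Icc a b, s ≤ t → ‖v t‖ ≤ ‖v s‖ := by
  intro s hs t ht hst
  have hsub : Ioc s t ⊆ Icc a b := fun x hx => ⟨hs.1.trans hx.1.le, hx.2.trans ht.2⟩
  have hf : IntegrableOn v' (Ioc s t) := hint.mono_set hsub
  have hii : ∀ c d : ℝ, c ∈ Icc a b → d ∈ Icc a b → IntervalIntegrable v' volume c d := by
    intro c d hc hd
    exact (hint.mono_set (uIcc_subset_Icc hc hd)).intervalIntegrable
  have key : ∀ r ∈ Icc a b, s ≤ r → v r = v s + ∫ u in Ioc s r, v' u := by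
    intro r hr hsr
    have h1 := hAC r hr
    have h2 := hAC s hs
    have h3 : ∫ u in a..r, v' u = (∫ u in a..s, v' u) + ∫ u in s..r, v' u :=
      (intervalIntegral.integral_add_adjacent_intervals (hii a s ⟨le_rfl, hab⟩ hs)
        (hii s r hs hr)).symm
    rw [h1, h2, h3, intervalIntegral.integral_of_le hsr, add_assoc]
  have hvt : v t = v s + ∫ u in Ioc s t, v' u := key t ht hst
  have hvr : ∀ r ∈ Ioc s t, v r = v s + ∫ u in Ioc s r, v' u :=
    fun r hr => key r (hsub hr) hr.1.le
  -- the integrand is a.e. nonpositive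
  have hae : ∀ᵐ r ∂(volume.restrict (Icc a b)), ⟪v' r, v r⟫ ≤ 0 := by
    filter_upwards [hdyn, hpos, hcomp, hfric] with r h1 h2 h3 h4
    rw [h1, inner_add_left, sum_inner]
    have hN : ⟪(ContinuousLinearMap.adjoint Jn) (lamN r), v r⟫ ≤ 0 := by
      rw [ContinuousLinearMap.adjoint_inner_left, PiLp.inner_apply]
      refine Finset.sum_nonpos fun i _ => ?_
      simpa [RCLike.inner_apply, conj_trivial, mul_comm] using h3 i
    have hT : ∀ j : Fin k, ⟪(ContinuousLinearMap.adjoint (Jt j)) (lamT r j), v r⟫ ≤ 0 := by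
      intro j
      rw [ContinuousLinearMap.adjoint_inner_left]
      obtain ⟨u, hu, hTj⟩ := h4 j
      rw [hTj, real_inner_smul_left]
      by_cases hw : (Jt j) (v r) = 0
      · simp [hw]
      · rw [unitDir, if_neg hw, mem_singleton_iff] at hu
        subst hu
        have hcnn : 0 ≤ μ j * lamN r (Fin.castLE hkm j) :=
          mul_nonneg (hμ j) (h2 _)
        have hinn : 0 ≤ ⟪‖(Jt j) (v r)‖⁻¹ • (Jt j) (v r), (Jt j) (v r)⟫ := by
          rw [real_inner_smul_left]
          exact mul_nonneg (inv_nonneg.mpr (norm_nonneg _)) real_inner_self_nonneg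
        exact mul_nonpos_of_nonpos_of_nonneg (neg_nonpos.mpr hcnn) hinn
    exact add_nonpos hN (Finset.sum_nonpos fun j _ => hT j)
  have hae2 : ∀ᵐ r ∂(volume.restrict (Ioc s t)), ⟪v' r, v r⟫ ≤ 0 :=
    ae_restrict_of_ae_restrict_of_subset hsub hae
  have hint_le : ∫ r in Ioc s t, ⟪v' r, v r⟫ ≤ 0 := integral_nonpos_of_ae hae2
  have hid : ‖v t‖ ^ 2 = ‖v s‖ ^ 2 + 2 * ∫ r in Ioc s t, ⟪v' r, v r⟫ := by
    rw [hvt, norm_sq_primitive v' (v s) hst hf]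
    congr 1
    congr 1
    exact setIntegral_congr_fun measurableSet_Ioc fun r hr => by rw [← hvr r hr]
  have hsq : ‖v t‖ ^ 2 ≤ ‖v s‖ ^ 2 := by rw [hid]; linarith
  nlinarith [norm_nonneg (v t), norm_nonneg (v s)]
end

section
/- (Single frictional contact termination, Lemma 1) Let J_n ∈ ℝ^{1×n}, J_t ∈ ℝ^{2×n}, μ > 0, with [J_n; J_t] ≠ 0. Let F(v) = {J_nᵀ − μ J_tᵀ u : u ∈ U(J_t v)} and define D(v) = {0} if J_n v > 0, D(v) = F(v) if J_n v < 0, D(v) = hull({0} ∪ F(v)) if J_n v = 0. Then there exists S > 0 such that for every solution v of v̇ ∈ D(v) on [0, ‖v(0)‖·S], there exists s* in this interval with J_n v(s*) ≥ 0. -/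
open MeasureTheory Set

/-- The set of net forces for a single frictional contact. -/
noncomputable def frictionalF {n : ℕ} (jn : EuclideanSpace ℝ (Fin n))
    (Jt : EuclideanSpace ℝ (Fin n) →L[ℝ] EuclideanSpace ℝ (Fin 2)) (μ : ℝ)
    (v : EuclideanSpace ℝ (Fin n)) : Set (EuclideanSpace ℝ (Fin n)) :=
  {f | ∃ u ∈ unitDir (Jt v), f = jn - μ • (ContinuousLinearMap.adjoint Jt) u}

open scoped Classical in
/-- Routh's single frictional contact differential inclusion. -/
noncomputable def frictionalD {n : ℕ} (jn : EuclideanSpace ℝ (Fin n))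
    (Jt : EuclideanSpace ℝ (Fin n) →L[ℝ] EuclideanSpace ℝ (Fin 2)) (μ : ℝ)
    (v : EuclideanSpace ℝ (Fin n)) : Set (EuclideanSpace ℝ (Fin n)) :=
  if (inner ℝ jn v : ℝ) > 0 then {0}
  else if (inner ℝ jn v : ℝ) < 0 then frictionalF jn Jt μ v
  else convexHull ℝ ({0} ∪ frictionalF jn Jt μ v)



section AuxLemmas
set_option linter.unusedSectionVars false
open scoped RealInnerProductSpace

lemma triangle_swap {s t : ℝ} (F : ℝ → ℝ → ℝ)
    (hsymm : ∀ q r, F q r = F r q)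
    (hF : Integrable (fun p : ℝ × ℝ => F p.1 p.2)
      ((volume.restrict (Ioc s t)).prod (volume.restrict (Ioc s t)))) :
    (∫ r in Ioc s t, ∫ q in Ioc r t, F q r) = ∫ r in Ioc s t, ∫ q in Ioc s r, F q r := by
  set D := Ioc s t with hD
  set G : ℝ × ℝ → ℝ := fun p => if p.1 < p.2 then F p.1 p.2 else 0 with hG
  have hGmeas : MeasurableSet {p : ℝ × ℝ | p.1 < p.2} :=
    measurableSet_lt measurable_fst measurable_snd
  have hGint : Integrable G ((volume.restrict D).prod (volume.restrict D)) := by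
    have : G = {p : ℝ × ℝ | p.1 < p.2}.indicator (fun p => F p.1 p.2) := by
      ext p; by_cases h : p.1 < p.2 <;> simp [hG, h, Set.indicator_apply]
    rw [this]
    exact hF.indicator hGmeas
  -- LHS = ∫ r in D, ∫ q in D, G (r, q)
  have hL : (∫ r in D, ∫ q in Ioc r t, F q r) = ∫ r in D, ∫ q in D, G (r, q) := by
    apply setIntegral_congr_fun measurableSet_Ioc
    intro r hr
    have h1 : D ∩ Ioi r = Ioc r t := by
      ext q; simp only [hD, mem_inter_iff, mem_Ioc, mem_Ioi]
      constructor
      · rintro ⟨⟨_, hq2⟩, hq3⟩; exact ⟨hq3, hq2⟩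
      · rintro ⟨hq1, hq2⟩; exact ⟨⟨lt_trans hr.1 hq1, hq2⟩, hq1⟩
    have : ∀ q, G (r, q) = (Ioi r).indicator (fun q => F r q) q := by
      intro q; by_cases h : r < q <;> simp [hG, h, Set.indicator_apply]
    simp_rw [this]
    rw [setIntegral_indicator measurableSet_Ioi, h1]
    exact setIntegral_congr_fun measurableSet_Ioc fun q _ => hsymm q r
  -- RHS = ∫ r in D, ∫ q in D, G (q, r)  (a.e. in q, diagonal negligible)
  have hR : (∫ r in D, ∫ q in Ioc s r, F q r) = ∫ r in D, ∫ q in D, G (q, r) := by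
    apply setIntegral_congr_fun measurableSet_Ioc
    intro r hr
    have h1 : D ∩ Iio r = Ioc s r \ {r} := by
      ext q; simp only [hD, mem_inter_iff, mem_Ioc, mem_Iio, mem_diff, mem_singleton_iff]
      constructor
      · rintro ⟨⟨hq1, _⟩, hq3⟩; exact ⟨⟨hq1, le_of_lt hq3⟩, ne_of_lt hq3⟩
      · rintro ⟨⟨hq1, hq2⟩, hq3⟩; exact ⟨⟨hq1, le_trans hq2 hr.2⟩, lt_of_le_of_ne hq2 hq3⟩
    have : ∀ q, G (q, r) = (Iio r).indicator (fun q => F q r) q := by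
      intro q; by_cases h : q < r <;> simp [hG, h, Set.indicator_apply]
    simp_rw [this]
    rw [setIntegral_indicator measurableSet_Iio, h1]
    have hae : (Ioc s r \ {r} : Set ℝ) =ᵐ[volume] Ioc s r :=
      MeasureTheory.diff_ae_eq_self.mpr (by
        refine measure_mono_null ?_ (measure_singleton r)
        exact Set.inter_subset_right)
    exact setIntegral_congr_set hae.symm
  rw [hL, hR]
  have := MeasureTheory.integral_integral_swap (f := fun r q => G (r, q)) (by exact hGint)
  rw [this]


variable {E : Type*} [NormedAddCommGroup E] [InnerProductSpace ℝ E] [CompleteSpace E]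

lemma contOn_of_integral {a b : ℝ} {g : ℝ → E} (hg : IntegrableOn g (Icc a b))
    {w : ℝ → E} (hw : ∀ t ∈ Icc a b, w t = w a + ∫ r in a..t, g r) :
    ContinuousOn w (Icc a b) := by
  have h1 : ContinuousOn (fun x => w a + ∫ r in Ioc a x, g r) (Icc a b) :=
    continuousOn_const.add (intervalIntegral.continuousOn_primitive hg)
  refine h1.congr ?_
  intro x hx
  rw [hw x hx, intervalIntegral.integral_of_le hx.1]

lemma intInt_of_mem {a b : ℝ} {g : ℝ → E} (hg : IntegrableOn g (Icc a b))
    {x y : ℝ} (hx : x ∈ Icc a b) (hy : y ∈ Icc a b) : IntervalIntegrable g volume x y :=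
  (hg.mono_set (uIcc_subset_Icc hx hy)).intervalIntegrable

lemma w_sub {a b : ℝ} {g : ℝ → E} (hg : IntegrableOn g (Icc a b))
    {w : ℝ → E} (hw : ∀ t ∈ Icc a b, w t = w a + ∫ r in a..t, g r)
    {x y : ℝ} (hx : x ∈ Icc a b) (hy : y ∈ Icc a b) (hxy : x ≤ y) :
    w y - w x = ∫ r in Ioc x y, g r := by
  rw [hw x hx, hw y hy, ← intervalIntegral.integral_of_le hxy]
  have := intervalIntegral.integral_add_adjacent_intervals
    (intInt_of_mem hg (left_mem_Icc.mpr (hx.1.trans hx.2)) hx)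
    (intInt_of_mem hg hx hy)
  rw [← this]; abel

lemma chain_sq {a b : ℝ} {g : ℝ → E} (hg : IntegrableOn g (Icc a b))
    {w : ℝ → E} (hw : ∀ t ∈ Icc a b, w t = w a + ∫ r in a..t, g r)
    {s t : ℝ} (hs : s ∈ Icc a b) (ht : t ∈ Icc a b) (hst : s ≤ t) :
    ‖w t‖^2 - ‖w s‖^2 = 2 * ∫ r in Ioc s t, ⟪w r, g r⟫ := by
  have hsubIcc : Icc s t ⊆ Icc a b := Icc_subset_Icc hs.1 ht.2
  have hsubIoc : Ioc s t ⊆ Icc a b := Ioc_subset_Icc_self.trans hsubIcc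
  have hwc : ContinuousOn w (Icc s t) := (contOn_of_integral hg hw).mono hsubIcc
  obtain ⟨C, hC⟩ := isCompact_Icc.exists_bound_of_continuousOn hwc
  have hgI : IntegrableOn g (Ioc s t) := hg.mono_set hsubIoc
  have hgm := hgI.aestronglyMeasurable
  have hwm : AEStronglyMeasurable w (volume.restrict (Ioc s t)) :=
    (hwc.mono Ioc_subset_Icc_self).aestronglyMeasurable measurableSet_Ioc
  have hmemae := ae_restrict_mem (μ := volume) (s := Ioc s t) measurableSet_Ioc
  have iInner : IntegrableOn (fun r => ⟪w r, g r⟫) (Ioc s t) := by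
    refine Integrable.mono' (hgI.norm.const_mul C) (hwm.inner hgm) ?_
    filter_upwards [hmemae] with r hr
    calc ‖⟪w r, g r⟫‖ ≤ ‖w r‖ * ‖g r‖ := norm_inner_le_norm _ _
      _ ≤ C * ‖g r‖ := by
        exact mul_le_mul_of_nonneg_right (hC r (Ioc_subset_Icc_self hr)) (norm_nonneg _)
  have hbd : ∀ x ∈ Icc s t, ∀ y ∈ Icc s t, ∀ (r : ℝ), ‖⟪w x - w y, g r⟫‖ ≤ 2*C*‖g r‖ := by
    intro x hx y hy r
    calc ‖⟪w x - w y, g r⟫‖ ≤ ‖w x - w y‖ * ‖g r‖ := norm_inner_le_norm _ _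
      _ ≤ 2*C*‖g r‖ := by
        refine mul_le_mul_of_nonneg_right ?_ (norm_nonneg _)
        calc ‖w x - w y‖ ≤ ‖w x‖ + ‖w y‖ := norm_sub_le _ _
          _ ≤ 2*C := by have := hC x hx; have := hC y hy; linarith
  have iX : IntegrableOn (fun r => ⟪w t - w r, g r⟫) (Ioc s t) := by
    refine Integrable.mono' (hgI.norm.const_mul (2*C))
      ((aestronglyMeasurable_const.sub hwm).inner hgm) ?_
    filter_upwards [hmemae] with r hr
    exact hbd t (right_mem_Icc.mpr hst) r (Ioc_subset_Icc_self hr) r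
  have iY : IntegrableOn (fun r => ⟪w r - w s, g r⟫) (Ioc s t) := by
    refine Integrable.mono' (hgI.norm.const_mul (2*C))
      ((hwm.sub aestronglyMeasurable_const).inner hgm) ?_
    filter_upwards [hmemae] with r hr
    exact hbd r (Ioc_subset_Icc_self hr) s (left_mem_Icc.mpr hst) r
  -- the symmetric-kernel cancellation
  have key : (∫ r in Ioc s t, ⟪w t - w r, g r⟫) = ∫ r in Ioc s t, ⟪w r - w s, g r⟫ := by
    have e1 : (∫ r in Ioc s t, ⟪w t - w r, g r⟫)
        = ∫ r in Ioc s t, ∫ q in Ioc r t, ⟪g q, g r⟫ := by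
      refine setIntegral_congr_fun measurableSet_Ioc fun r hr => ?_
      rw [w_sub hg hw (hsubIoc hr) ht hr.2]
      rw [real_inner_comm, ← integral_inner (hg.mono_set ((Ioc_subset_Icc_self).trans
        (Icc_subset_Icc (hsubIoc hr).1 ht.2)))]
      exact setIntegral_congr_fun measurableSet_Ioc fun q _ => real_inner_comm _ _
    have e2 : (∫ r in Ioc s t, ⟪w r - w s, g r⟫)
        = ∫ r in Ioc s t, ∫ q in Ioc s r, ⟪g q, g r⟫ := by
      refine setIntegral_congr_fun measurableSet_Ioc fun r hr => ?_
      rw [w_sub hg hw hs (hsubIoc hr) (le_of_lt hr.1)]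
      rw [real_inner_comm, ← integral_inner (hg.mono_set ((Ioc_subset_Icc_self).trans
        (Icc_subset_Icc hs.1 (hsubIoc hr).2)))]
      exact setIntegral_congr_fun measurableSet_Ioc fun q _ => real_inner_comm _ _
    rw [e1, e2]
    refine triangle_swap _ (fun q r => real_inner_comm _ _) ?_
    refine Integrable.mono' (hgI.norm.mul_prod hgI.norm) (hgm.comp_fst.inner hgm.comp_snd) ?_
    filter_upwards with p
    exact norm_inner_le_norm _ _
  calc ‖w t‖^2 - ‖w s‖^2 = ⟪w t + w s, w t - w s⟫ := by
        rw [inner_sub_right, inner_add_left, inner_add_left, real_inner_comm (w s) (w t),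
          real_inner_self_eq_norm_sq, real_inner_self_eq_norm_sq]
        ring
    _ = ⟪w t + w s, ∫ r in Ioc s t, g r⟫ := by rw [w_sub hg hw hs ht hst]
    _ = ∫ r in Ioc s t, ⟪w t + w s, g r⟫ := (integral_inner hgI _).symm
    _ = ∫ r in Ioc s t, (2 * ⟪w r, g r⟫ + (⟪w t - w r, g r⟫ - ⟪w r - w s, g r⟫)) := by
        refine setIntegral_congr_fun measurableSet_Ioc fun r _ => ?_
        have hv : w t + w s = (2:ℝ) • w r + ((w t - w r) - (w r - w s)) := by module
        rw [hv, inner_add_left, inner_sub_left, real_inner_smul_left]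
    _ = 2 * ∫ r in Ioc s t, ⟪w r, g r⟫ := by
        have iXY : IntegrableOn
            (fun r => ⟪w t - w r, g r⟫ - ⟪w r - w s, g r⟫) (Ioc s t) := iX.sub iY
        rw [integral_add (iInner.const_mul 2) iXY, integral_sub iX iY, key,
          sub_self, add_zero, MeasureTheory.integral_const_mul]

lemma chain_ineq {a b : ℝ} {g : ℝ → E} (hg : IntegrableOn g (Icc a b))
    {w : ℝ → E} (hw : ∀ t ∈ Icc a b, w t = w a + ∫ r in a..t, g r)
    {c : ℝ}
    (hbnd : ∀ᵐ r ∂volume.restrict (Icc a b), ⟪w r, g r⟫ ≤ -c * ‖w r‖)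
    {s t : ℝ} (hs : s ∈ Icc a b) (ht : t ∈ Icc a b) (hst : s ≤ t) :
    ‖w t‖^2 ≤ ‖w s‖^2 - 2*c*∫ r in s..t, ‖w r‖ := by
  have hchain := chain_sq hg hw hs ht hst
  have hsubIcc : Icc s t ⊆ Icc a b := Icc_subset_Icc hs.1 ht.2
  have hsubIoc : Ioc s t ⊆ Icc a b := Ioc_subset_Icc_self.trans hsubIcc
  have hwc : ContinuousOn w (Icc s t) := (contOn_of_integral hg hw).mono hsubIcc
  obtain ⟨C, hC⟩ := isCompact_Icc.exists_bound_of_continuousOn hwc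
  have hgI : IntegrableOn g (Ioc s t) := hg.mono_set hsubIoc
  have hwm : AEStronglyMeasurable w (volume.restrict (Ioc s t)) :=
    (hwc.mono Ioc_subset_Icc_self).aestronglyMeasurable measurableSet_Ioc
  have iInner : IntegrableOn (fun r => ⟪w r, g r⟫) (Ioc s t) := by
    refine Integrable.mono' (hgI.norm.const_mul C) (hwm.inner hgI.aestronglyMeasurable) ?_
    filter_upwards [ae_restrict_mem measurableSet_Ioc] with r hr
    calc ‖⟪w r, g r⟫‖ ≤ ‖w r‖ * ‖g r‖ := norm_inner_le_norm _ _
      _ ≤ C * ‖g r‖ :=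
        mul_le_mul_of_nonneg_right (hC r (Ioc_subset_Icc_self hr)) (norm_nonneg _)
  have iNorm : IntegrableOn (fun r => ‖w r‖) (Ioc s t) :=
    (hwc.norm.integrableOn_Icc).mono_set Ioc_subset_Icc_self
  have hmono : (∫ r in Ioc s t, ⟪w r, g r⟫) ≤ ∫ r in Ioc s t, -c * ‖w r‖ := by
    refine integral_mono_ae iInner (iNorm.const_mul (-c)) ?_
    exact ae_restrict_of_ae_restrict_of_subset hsubIoc hbnd
  rw [MeasureTheory.integral_const_mul] at hmono
  rw [intervalIntegral.integral_of_le hst]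
  linarith

end AuxLemmas

section AuxLemmas2
open scoped RealInnerProductSpace

lemma time_bound {T c : ℝ} (hc : 0 < c) (hT : 0 < T) {ψ : ℝ → ℝ}
    (hψ : Continuous ψ) (hψpos : ∀ r ∈ Icc 0 T, 0 < ψ r)
    (key : ∀ s ∈ Icc 0 T, 2 * c * ∫ r in s..T, ψ r ≤ (ψ s)^2) :
    T ≤ ψ 0 / c := by
  have hint : ∀ x y : ℝ, IntervalIntegrable ψ volume x y :=
    fun x y => hψ.intervalIntegrable x y
  set I : ℝ → ℝ := fun s => ∫ r in s..T, ψ r with hI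
  have h2 : ∀ u, I u = (∫ r in (0:ℝ)..T, ψ r) - ∫ r in (0:ℝ)..u, ψ r := by
    intro u
    rw [hI, eq_sub_iff_add_eq, add_comm,
      intervalIntegral.integral_add_adjacent_intervals (hint 0 u) (hint u T)]
  have hIderiv : ∀ s ∈ Ioo 0 T, HasDerivAt I (-ψ s) s := by
    intro s _
    have h1 : HasDerivAt (fun u => ∫ r in (0:ℝ)..u, ψ r) (ψ s) s :=
      intervalIntegral.integral_hasDerivAt_right (hint 0 s)
        (hψ.stronglyMeasurable.stronglyMeasurableAtFilter) hψ.continuousAt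
    have := (hasDerivAt_const s (∫ r in (0:ℝ)..T, ψ r)).sub h1
    simp only [zero_sub] at this
    exact (funext h2 : I = _) ▸ this
  have hIcont : Continuous I := by
    rw [funext h2]
    exact continuous_const.sub (intervalIntegral.continuous_primitive hint 0)
  have hIpos : ∀ s ∈ Ico 0 T, 0 < I s := by
    intro s hs
    exact intervalIntegral.intervalIntegral_pos_of_pos_on (hint s T)
      (fun x hx => hψpos x ⟨hs.1.trans hx.1.le, hx.2.le⟩) hs.2
  have hInn : ∀ s ∈ Icc 0 T, 0 ≤ I s := by
    intro s hs
    rcases eq_or_lt_of_le hs.2 with h | h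
    · simp [hI, h]
    · exact (hIpos s ⟨hs.1, h⟩).le
  set J : ℝ → ℝ := fun s => Real.sqrt (I s) + Real.sqrt (c/2) * s with hJ
  have hJcont : Continuous J := by
    rw [hJ]
    exact (Real.continuous_sqrt.comp hIcont).add (continuous_const.mul continuous_id)
  have hJanti : AntitoneOn J (Icc 0 T) := by
    apply antitoneOn_of_deriv_nonpos (convex_Icc 0 T) hJcont.continuousOn
    · intro s hs
      rw [interior_Icc] at hs
      have hd : HasDerivAt J (1 / (2 * Real.sqrt (I s)) * (-ψ s) + Real.sqrt (c/2) * 1) s := by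
        exact ((Real.hasDerivAt_sqrt (ne_of_gt (hIpos s ⟨hs.1.le, hs.2⟩))).comp s
          (hIderiv s hs)).add ((hasDerivAt_id s).const_mul (Real.sqrt (c/2)))
      exact hd.differentiableAt.differentiableWithinAt
    · intro s hs
      rw [interior_Icc] at hs
      have hIs := hIpos s ⟨hs.1.le, hs.2⟩
      have hd : HasDerivAt J (1 / (2 * Real.sqrt (I s)) * (-ψ s) + Real.sqrt (c/2) * 1) s :=
        ((Real.hasDerivAt_sqrt (ne_of_gt hIs)).comp s
          (hIderiv s hs)).add ((hasDerivAt_id s).const_mul (Real.sqrt (c/2)))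
      rw [hd.deriv]
      have hden : 0 < 2 * Real.sqrt (I s) := by positivity
      have hkey := key s ⟨hs.1.le, hs.2.le⟩
      have hψs := hψpos s ⟨hs.1.le, hs.2.le⟩
      have hstep : Real.sqrt (c/2) * (2 * Real.sqrt (I s)) ≤ ψ s := by
        set x := Real.sqrt (c/2) * (2 * Real.sqrt (I s)) with hx
        have hxnn : 0 ≤ x := by positivity
        have e1 : x^2 = 2 * c * I s := by
          have h1 : Real.sqrt (c/2)^2 = c/2 := Real.sq_sqrt (by positivity)
          have h2 : Real.sqrt (I s)^2 = I s := Real.sq_sqrt hIs.le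
          rw [hx]; nlinarith [h1, h2]
        calc x = Real.sqrt (x^2) := (Real.sqrt_sq hxnn).symm
          _ = Real.sqrt (2*c*I s) := by rw [e1]
          _ ≤ Real.sqrt ((ψ s)^2) := Real.sqrt_le_sqrt hkey
          _ = ψ s := Real.sqrt_sq hψs.le
      rw [mul_one]
      have : Real.sqrt (c/2) ≤ ψ s / (2 * Real.sqrt (I s)) := by
        rw [le_div_iff₀ hden]; exact hstep
      have h3 : 1 / (2 * Real.sqrt (I s)) * (-ψ s) = -(ψ s / (2 * Real.sqrt (I s))) := by
        field_simp
      rw [h3]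
      linarith
  have hJT : J T ≤ J 0 := hJanti (left_mem_Icc.mpr hT.le) (right_mem_Icc.mpr hT.le) hT.le
  have hIT : I T = 0 := by simp [hI]
  have h4 : Real.sqrt (c/2) * T ≤ Real.sqrt (I 0) := by
    simp only [hJ, hIT, Real.sqrt_zero, zero_add, mul_zero, add_zero, mul_comm] at hJT
    simpa [mul_comm] using hJT
  have h5 : (c/2) * T^2 ≤ I 0 := by
    have := mul_self_le_mul_self (by positivity) h4
    calc (c/2)*T^2 = (Real.sqrt (c/2) * T) * (Real.sqrt (c/2) * T) := by
          rw [show Real.sqrt (c/2) * T * (Real.sqrt (c/2) * T)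
            = Real.sqrt (c/2) * Real.sqrt (c/2) * T^2 by ring,
            Real.mul_self_sqrt (by positivity)]
      _ ≤ Real.sqrt (I 0) * Real.sqrt (I 0) := this
      _ = I 0 := Real.mul_self_sqrt (hInn 0 (left_mem_Icc.mpr hT.le))
  have h6 : 2 * c * I 0 ≤ (ψ 0)^2 := key 0 (left_mem_Icc.mpr hT.le)
  have hψ0 := hψpos 0 (left_mem_Icc.mpr hT.le)
  rw [le_div_iff₀ hc]
  nlinarith [sq_nonneg (T*c - ψ 0)]

lemma exists_proj {n : ℕ} (jn : EuclideanSpace ℝ (Fin n))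
    (Jt : EuclideanSpace ℝ (Fin n) →L[ℝ] EuclideanSpace ℝ (Fin 2))
    (hJ : jn ≠ 0 ∨ Jt ≠ 0) :
    ∃ (P : EuclideanSpace ℝ (Fin n) →L[ℝ] EuclideanSpace ℝ (Fin n)) (ε : ℝ), 0 < ε ∧
      (∀ x, ‖P x‖ ≤ ‖x‖) ∧
      (∀ x y, ⟪P x, y⟫ = ⟪x, P y⟫) ∧
      P jn = jn ∧
      (∀ u, P (ContinuousLinearMap.adjoint Jt u) = ContinuousLinearMap.adjoint Jt u) ∧
      (∀ x, ε * ‖P x‖ ≤ |⟪jn, x⟫| + ‖Jt x‖) := by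
  classical
  set K : Submodule ℝ (EuclideanSpace ℝ (Fin n)) :=
    (ℝ ∙ jn) ⊔ LinearMap.range (ContinuousLinearMap.adjoint Jt : EuclideanSpace ℝ (Fin 2) →ₗ[ℝ] EuclideanSpace ℝ (Fin n)) with hKdef
  have hK_jn : jn ∈ K := Submodule.mem_sup_left (Submodule.mem_span_singleton_self jn)
  have hK_adj : ∀ u, ContinuousLinearMap.adjoint Jt u ∈ K := fun u =>
    Submodule.mem_sup_right (LinearMap.mem_range_self _ u)
  set P : EuclideanSpace ℝ (Fin n) →L[ℝ] EuclideanSpace ℝ (Fin n) :=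
    K.subtypeL.comp (K.orthogonalProjectionOnto) with hPdef
  have hPsa : ∀ x y, ⟪P x, y⟫ = ⟪x, P y⟫ := fun x y =>
    K.inner_starProjection_left_eq_right x y
  have hPmem : ∀ x, P x ∈ K := fun x => SetLike.coe_mem _
  have hPid : ∀ y ∈ K, P y = y := fun y hy => K.starProjection_eq_self_iff.mpr hy
  have hPle : ∀ x, ‖P x‖ ≤ ‖x‖ := by
    intro x
    calc ‖P x‖ = ‖K.orthogonalProjectionOnto x‖ := rfl
      _ ≤ ‖K.orthogonalProjectionOnto‖ * ‖x‖ := (K.orthogonalProjectionOnto).le_opNorm x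
      _ ≤ 1 * ‖x‖ := mul_le_mul_of_nonneg_right (K.orthogonalProjectionOnto_norm_le) (norm_nonneg x)
      _ = ‖x‖ := one_mul _
  -- the function to minimize
  set f : EuclideanSpace ℝ (Fin n) → ℝ := fun y => |⟪jn, y⟫| + ‖Jt y‖ with hfdef
  have hfc : Continuous f := ((continuous_const.inner continuous_id).abs).add Jt.continuous.norm
  have hfnn : ∀ y, 0 ≤ f y := fun y => add_nonneg (abs_nonneg _) (norm_nonneg _)
  -- a nonzero element of K
  obtain ⟨y₀, hy₀K, hy₀ne⟩ : ∃ y₀, y₀ ∈ K ∧ y₀ ≠ 0 := by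
    rcases hJ with h | h
    · exact ⟨jn, hK_jn, h⟩
    · have : ∃ z, ContinuousLinearMap.adjoint Jt z ≠ 0 := by
        by_contra hall
        push_neg at hall
        apply h
        refine ContinuousLinearMap.ext fun x => ?_
        have hx : ∀ z, ⟪Jt x, z⟫ = 0 := fun z => by
          rw [← ContinuousLinearMap.adjoint_inner_right, hall z, inner_zero_right]
        have := hx (Jt x)
        rw [inner_self_eq_zero] at this
        simpa using this
      obtain ⟨z, hz⟩ := this
      exact ⟨_, hK_adj z, hz⟩
  set Sset : Set (EuclideanSpace ℝ (Fin n)) := (K : Set _) ∩ Metric.sphere 0 1 with hSdef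
  have hScpt : IsCompact Sset := (isCompact_sphere 0 1).inter_left K.closed_of_finiteDimensional
  have hSne : Sset.Nonempty := by
    refine ⟨‖y₀‖⁻¹ • y₀, K.smul_mem _ hy₀K, ?_⟩
    have : ‖y₀‖ ≠ 0 := norm_ne_zero_iff.mpr hy₀ne
    simp [norm_smul, abs_of_nonneg (inv_nonneg.mpr (norm_nonneg y₀)), inv_mul_cancel₀ this]
  obtain ⟨ystar, hyS, hmin⟩ := hScpt.exists_isMinOn hSne hfc.continuousOn
  refine ⟨P, f ystar, ?_, hPle, hPsa, hPid jn hK_jn, fun u => hPid _ (hK_adj u), ?_⟩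
  · -- positivity of ε
    rcases lt_or_eq_of_le (hfnn ystar) with h | h
    · exact h
    exfalso
    have h' : |⟪jn, ystar⟫| + ‖Jt ystar‖ = 0 := h.symm
    have hinner0 : ⟪jn, ystar⟫ = 0 := by
      have := abs_nonneg (⟪jn, ystar⟫ : ℝ); have := norm_nonneg (Jt ystar)
      have : |⟪jn, ystar⟫| = 0 := by linarith
      exact abs_eq_zero.mp this
    have hJt0 : Jt ystar = 0 := by
      have := abs_nonneg (⟪jn, ystar⟫ : ℝ); have := norm_nonneg (Jt ystar)
      have : ‖Jt ystar‖ = 0 := by linarith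
      exact norm_eq_zero.mp this
    have hyK : ystar ∈ K := hyS.1
    obtain ⟨u1, hu1, u2, hu2, huv⟩ := Submodule.mem_sup.mp hyK
    obtain ⟨a, rfl⟩ := Submodule.mem_span_singleton.mp hu1
    obtain ⟨z, rfl⟩ := hu2
    have : ⟪ystar, ystar⟫ = 0 := by
      nth_rewrite 1 [← huv]
      rw [inner_add_left, real_inner_smul_left, hinner0,
        ContinuousLinearMap.coe_coe, ContinuousLinearMap.adjoint_inner_left, hJt0]
      simp
    have : ystar = 0 := by rwa [inner_self_eq_zero] at this
    have hnorm1 : ‖ystar‖ = 1 := by simpa using hyS.2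
    rw [this] at hnorm1; simp at hnorm1
  · -- the main inequality
    intro x
    -- f x = f (P x)
    have hinner_eq : ⟪jn, x⟫ = ⟪jn, P x⟫ := by
      rw [← hPsa, hPid jn hK_jn]
    have hJt_eq : Jt x = Jt (P x) := by
      have horth : ∀ k ∈ K, ⟪x - P x, k⟫ = 0 := by
        intro k hk
        rw [inner_sub_left, hPsa x k, hPid k hk, sub_self]
      have hz : Jt (x - P x) = 0 := by
        have h1 : ⟪Jt (x - P x), Jt (x - P x)⟫ = 0 := by
          rw [← ContinuousLinearMap.adjoint_inner_right]
          exact horth _ (hK_adj _)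
        rwa [inner_self_eq_zero] at h1
      rw [map_sub, sub_eq_zero] at hz
      exact hz
    rw [hinner_eq, hJt_eq]
    by_cases hPx : P x = 0
    · rw [hPx, norm_zero, mul_zero]
      exact hfnn (P x) |>.trans (le_of_eq (by rw [hPx]))
    · have hny : 0 < ‖P x‖ := norm_pos_iff.mpr hPx
      have hunit : ‖P x‖⁻¹ • P x ∈ Sset := by
        refine ⟨K.smul_mem _ (hPmem x), ?_⟩
        simp [norm_smul, abs_of_nonneg (inv_nonneg.mpr (norm_nonneg (P x))),
          inv_mul_cancel₀ hny.ne']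
      have hle : f ystar ≤ f (‖P x‖⁻¹ • P x) := isMinOn_iff.mp hmin _ hunit
      have hfunit : f (‖P x‖⁻¹ • P x) = ‖P x‖⁻¹ * (|⟪jn, P x⟫| + ‖Jt (P x)‖) := by
        simp only [hfdef]
        rw [real_inner_smul_right, Jt.map_smul, norm_smul, abs_mul,
          abs_of_nonneg (inv_nonneg.mpr (norm_nonneg (P x)))]
        rw [Real.norm_eq_abs, abs_of_nonneg (inv_nonneg.mpr (norm_nonneg (P x)))]
        ring
      rw [hfunit, inv_mul_eq_div, le_div_iff₀ hny] at hle
      exact hle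

end AuxLemmas2

open scoped RealInnerProductSpace in
/-- Lemma 1 (single frictional contact termination): there is `S > 0` such that
every solution on `[0, ‖v(0)‖·S]` reaches a non-penetrating normal velocity. -/
theorem frictional_termination {n : ℕ} (jn : EuclideanSpace ℝ (Fin n))
    (Jt : EuclideanSpace ℝ (Fin n) →L[ℝ] EuclideanSpace ℝ (Fin 2))
    (μ : ℝ) (hμ : 0 < μ) (hJ : jn ≠ 0 ∨ Jt ≠ 0) :
    ∃ S > (0 : ℝ), ∀ v : ℝ → EuclideanSpace ℝ (Fin n),
      IsSolOn (frictionalD jn Jt μ) 0 (‖v 0‖ * S) v →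
      ∃ sstar ∈ Icc (0 : ℝ) (‖v 0‖ * S), 0 ≤ (inner ℝ jn (v sstar) : ℝ) := by
  obtain ⟨P, ε, hε, hPle, hPsa, hPjn, hPadj, hεineq⟩ := exists_proj jn Jt hJ
  set m : ℝ := min 1 μ with hm
  have hmpos : 0 < m := lt_min one_pos hμ
  set c : ℝ := m * ε with hc
  have hcpos : 0 < c := mul_pos hmpos hε
  refine ⟨2 / c, by positivity, ?_⟩
  intro v hsol
  set T : ℝ := ‖v 0‖ * (2 / c) with hTdef
  have hT0 : 0 ≤ T := by positivity
  by_contra hcon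
  push_neg at hcon
  have h00 : (0:ℝ) ∈ Icc 0 T := left_mem_Icc.mpr hT0
  have hTm : T ∈ Icc 0 T := right_mem_Icc.mpr hT0
  have hv0ne : v 0 ≠ 0 := by
    intro h
    have h2 := hcon 0 h00
    rw [h, inner_zero_right] at h2
    exact lt_irrefl 0 h2
  have hv0 : 0 < ‖v 0‖ := norm_pos_iff.mpr hv0ne
  have hTpos : 0 < T := by positivity
  obtain ⟨v', hint, hmem, heq⟩ := hsol
  have hmemF : ∀ᵐ r ∂volume.restrict (Icc 0 T), v' r ∈ frictionalF jn Jt μ (v r) := by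
    filter_upwards [hmem, ae_restrict_mem measurableSet_Icc] with r h1 h2
    rw [frictionalD, if_neg (not_lt.mpr (hcon r h2).le), if_pos (hcon r h2)] at h1
    exact h1
  set w : ℝ → EuclideanSpace ℝ (Fin n) := fun r => P (v r) with hw
  have hPv' : ∀ᵐ r ∂volume.restrict (Icc 0 T), P (v' r) = v' r := by
    filter_upwards [hmemF] with r hF
    obtain ⟨u, hu, huv⟩ := hF
    rw [huv, map_sub, P.map_smul, hPjn, hPadj]
  have hweq : ∀ t ∈ Icc 0 T, w t = w 0 + ∫ r in (0:ℝ)..t, v' r := by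
    intro t ht
    have h1 : w t = w 0 + P (∫ r in (0:ℝ)..t, v' r) := by
      rw [hw]; simp only
      rw [heq t ht, map_add]
    rw [h1]
    congr 1
    rw [← P.intervalIntegral_comp_comm (intInt_of_mem hint h00 ht)]
    rw [intervalIntegral.integral_of_le ht.1, intervalIntegral.integral_of_le ht.1]
    refine integral_congr_ae ?_
    exact ae_restrict_of_ae_restrict_of_subset
      (Ioc_subset_Icc_self.trans (Icc_subset_Icc le_rfl ht.2)) hPv'
  -- a.e. derivative bound
  have hbnd : ∀ᵐ r ∂volume.restrict (Icc 0 T), ⟪w r, v' r⟫ ≤ -c * ‖w r‖ := by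
    filter_upwards [hmemF, ae_restrict_mem measurableSet_Icc] with r hF hr
    obtain ⟨u, hu, huv⟩ := hF
    have h1 : ⟪w r, v' r⟫ = ⟪v r, v' r⟫ := by
      rw [hw]; simp only
      rw [hPsa]
      congr 1
      rw [huv, map_sub, P.map_smul, hPjn, hPadj]
    have hzu : ⟪Jt (v r), u⟫ = ‖Jt (v r)‖ := by
      by_cases hz : Jt (v r) = 0
      · rw [hz, inner_zero_left, norm_zero]
      · rw [unitDir, if_neg hz, mem_singleton_iff] at hu
        rw [hu, real_inner_smul_right, real_inner_self_eq_norm_sq]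
        have hnz : ‖Jt (v r)‖ ≠ 0 := norm_ne_zero_iff.mpr hz
        field_simp
    have h2 : ⟪v r, v' r⟫ = ⟪jn, v r⟫ - μ * ‖Jt (v r)‖ := by
      rw [huv, inner_sub_right, real_inner_smul_right,
        ContinuousLinearMap.adjoint_inner_right, hzu, real_inner_comm]
    have h3 : ε * ‖w r‖ ≤ |⟪jn, v r⟫| + ‖Jt (v r)‖ := hεineq (v r)
    have h4 : ⟪jn, v r⟫ < 0 := hcon r hr
    have habs : |⟪jn, v r⟫| = -⟪jn, v r⟫ := abs_of_neg h4
    have hB : (0:ℝ) ≤ ‖Jt (v r)‖ := norm_nonneg _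
    have hA : (0:ℝ) ≤ |⟪jn, v r⟫| := abs_nonneg _
    have h5 : m * (ε * ‖w r‖) ≤ m * (|⟪jn, v r⟫| + ‖Jt (v r)‖) :=
      mul_le_mul_of_nonneg_left h3 hmpos.le
    have h6 : m * |⟪jn, v r⟫| ≤ |⟪jn, v r⟫| :=
      mul_le_of_le_one_left hA (min_le_left 1 μ)
    have h7 : m * ‖Jt (v r)‖ ≤ μ * ‖Jt (v r)‖ :=
      mul_le_mul_of_nonneg_right (min_le_right 1 μ) hB
    rw [h1, h2]
    have h8 : c * ‖w r‖ = m * (ε * ‖w r‖) := by rw [hc]; ring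
    rw [mul_add] at h5
    linarith
  -- continuity of w and positivity of ‖w‖
  have hwcont : ContinuousOn w (Icc 0 T) := contOn_of_integral hint hweq
  have hwpos : ∀ r ∈ Icc 0 T, 0 < ‖w r‖ := by
    intro r hr
    rcases eq_or_lt_of_le (norm_nonneg (w r)) with h | h
    · exfalso
      have hw0 : w r = 0 := by rw [← norm_eq_zero]; exact h.symm
      have : ⟪jn, v r⟫ = (0:ℝ) := by
        have := hPsa jn (v r)
        rw [hPjn] at this
        rw [this]
        show ⟪jn, w r⟫ = 0
        rw [hw0, inner_zero_right]
      exact absurd this (ne_of_lt (hcon r hr))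
    · exact h
  -- extend ψ continuously
  set ψ : ℝ → ℝ := fun r => ‖IccExtend hT0 ((Icc (0:ℝ) T).restrict w) r‖ with hψdef
  have hψeq : ∀ r ∈ Icc 0 T, ψ r = ‖w r‖ := by
    intro r hr
    rw [hψdef]; simp only
    rw [IccExtend_of_mem hT0 _ hr]
    rfl
  have hψcont : Continuous ψ :=
    (continuous_IccExtend_iff.mpr (hwcont.restrict)).norm
  have hψpos : ∀ r ∈ Icc 0 T, 0 < ψ r := fun r hr => (hψeq r hr) ▸ hwpos r hr
  -- key inequality
  have key : ∀ s ∈ Icc 0 T, 2 * c * ∫ r in s..T, ψ r ≤ (ψ s)^2 := by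
    intro s hs
    have hci := chain_ineq hint hweq hbnd hs hTm hs.2
    have hicong : (∫ r in s..T, ψ r) = ∫ r in s..T, ‖w r‖ := by
      refine intervalIntegral.integral_congr ?_
      intro r hr
      rw [uIcc_of_le hs.2] at hr
      exact hψeq r ⟨hs.1.trans hr.1, hr.2⟩
    rw [hicong, hψeq s hs]
    nlinarith [sq_nonneg (‖w T‖)]
  have htb := time_bound hcpos hTpos hψcont hψpos key
  rw [hψeq 0 h00] at htb
  have hw0le : ‖w 0‖ ≤ ‖v 0‖ := hPle (v 0)
  have h9 : T ≤ ‖v 0‖ / c := htb.trans (by gcongr)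
  have h10 : T * c ≤ ‖v 0‖ / c * c := mul_le_mul_of_nonneg_right h9 hcpos.le
  rw [div_mul_cancel₀ _ hcpos.ne'] at h10
  have h11 : T * c = 2 * ‖v 0‖ := by rw [hTdef]; field_simp
  linarith
end

section
/- (Bounded Exit, Lemma 6) Let D : ℝⁿ → 𝒫(ℝⁿ) be positively homogeneous of degree zero, let A ⊆ ℝⁿ be a cone not containing 0, and suppose D is α(s)-dissipative: for every s > 0 and every solution v of v̇ ∈ D(v) on [0,s] with v([0,s]) ⊆ A and ‖v(0)‖ = 1, we have ‖v(s)‖ ≤ 1 − α(s), where α : (0,∞) → [0,1) is positive. Then for any S > 0 and any solution v on [0, ‖v(0)‖·S/α(S)], the image v([0, ‖v(0)‖·S/α(S)]) is not contained in A. -/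
open MeasureTheory Set

lemma affine_preimage_null {c r : ℝ} (hr : r ≠ 0) {N : Set ℝ} (hN : volume N = 0) :
    volume ((fun t => c + r * t) ⁻¹' N) = 0 := by
  have h1 : (fun t => c + r * t) ⁻¹' N = (r * ·) ⁻¹' ((c + ·) ⁻¹' N) := rfl
  have h2 : volume ((c + ·) ⁻¹' N) = 0 := by
    rw [measure_preimage_add volume c N]; exact hN
  rw [h1, Real.volume_preimage_mul_left hr, h2, mul_zero]

/-- Bounded Exit (Lemma 6): if `D` is positively homogeneous of degree zero and
`α(s)`-dissipative on the cone `A`, then no solution can remain in `A` on the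
interval `[0, ‖v(0)‖·S/α(S)]`. -/
theorem bounded_exit {n : ℕ}
    (D : EuclideanSpace ℝ (Fin n) → Set (EuclideanSpace ℝ (Fin n)))
    (hD : ∀ k : ℝ, 0 < k → ∀ v, D (k • v) = D v)
    (A : Set (EuclideanSpace ℝ (Fin n)))
    (hcone : ∀ k : ℝ, 0 < k → ∀ x ∈ A, k • x ∈ A) (h0A : (0 : EuclideanSpace ℝ (Fin n)) ∉ A)
    (α : ℝ → ℝ) (hα : ∀ s > (0 : ℝ), 0 < α s ∧ α s < 1)
    (hdiss : ∀ s > (0 : ℝ), ∀ v : ℝ → EuclideanSpace ℝ (Fin n),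
      IsSolOn D 0 s v → v '' Icc 0 s ⊆ A → ‖v 0‖ = 1 → ‖v s‖ ≤ 1 - α s) :
    ∀ S > (0 : ℝ), ∀ v : ℝ → EuclideanSpace ℝ (Fin n),
      IsSolOn D 0 (‖v 0‖ * S / α S) v →
      ¬ (v '' Icc 0 (‖v 0‖ * S / α S) ⊆ A) := by
  intro S hS v hsol himg
  obtain ⟨ha0, ha1⟩ := hα S hS
  set a := α S with ha
  set T : ℝ := ‖v 0‖ * S / a with hTdef
  obtain ⟨v', hint, hae, hrep⟩ := hsol
  have hT0 : (0 : ℝ) ≤ T := by positivity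
  have hmem : ∀ t ∈ Icc (0:ℝ) T, v t ∈ A := fun t ht => himg ⟨t, ht, rfl⟩
  have huIcc : uIcc (0:ℝ) T = Icc 0 T := uIcc_of_le hT0
  -- interval integrability of v' between points of `Icc 0 T`
  have hii : ∀ p ∈ Icc (0:ℝ) T, ∀ q ∈ Icc (0:ℝ) T, IntervalIntegrable v' volume p q := by
    intro p hp q hq
    exact (hint.mono_set (uIcc_subset_Icc hp hq)).intervalIntegrable
  have h0T : (0:ℝ) ∈ Icc (0:ℝ) T := ⟨le_refl 0, hT0⟩
  -- v q - v p = ∫ p..q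
  have hdiff : ∀ p ∈ Icc (0:ℝ) T, ∀ q ∈ Icc (0:ℝ) T, v q = v p + ∫ s in p..q, v' s := by
    intro p hp q hq
    have h1 := hrep p hp
    have h2 := hrep q hq
    have := intervalIntegral.integral_interval_sub_left (hii 0 h0T q hq) (hii 0 h0T p hp)
    rw [h1, h2]
    rw [← this]; abel
  -- continuity of v on Icc 0 T
  have hcont : ContinuousOn v (Icc 0 T) := by
    have hprim := intervalIntegral.continuousOn_primitive_interval
      (μ := volume) (a := 0) (b := T) (f := v') (huIcc ▸ hint)
    rw [huIcc] at hprim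
    exact (continuousOn_const.add hprim).congr (fun t ht => hrep t ht)
  -- positive minimum of ‖v‖ on the compact interval
  obtain ⟨t₀, ht₀, hmin⟩ := isCompact_Icc.exists_isMinOn (nonempty_of_mem h0T)
    (continuous_norm.comp_continuousOn hcont)
  have hc : 0 < ‖v t₀‖ := by
    rw [norm_pos_iff]
    intro h
    exact h0A (h ▸ hmem t₀ ht₀)
  -- main induction
  have key : ∀ k : ℕ, ∃ s ∈ Icc (0:ℝ) T,
      ‖v s‖ ≤ ‖v 0‖ * (1 - a) ^ k ∧ s + ‖v s‖ * S / a ≤ T := by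
    intro k
    induction k with
    | zero => exact ⟨0, h0T, by simp, by simp [hTdef]⟩
    | succ k ih =>
      obtain ⟨s, hsT, hnorm, hinv⟩ := ih
      set r := ‖v s‖ with hrdef
      have hr : 0 < r := by
        rw [hrdef, norm_pos_iff]
        intro h
        exact h0A (h ▸ hmem s hsT)
      have hrS : s + r * S ≤ T := by
        have : r * S ≤ r * S / a := by
          rw [le_div_iff₀ ha0]
          nlinarith [mul_nonneg (mul_pos hr hS).le (by linarith : (0:ℝ) ≤ 1 - a)]
        linarith
      have hsub : ∀ t ∈ Icc (0:ℝ) S, s + r * t ∈ Icc (0:ℝ) T := by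
        intro t ht
        constructor
        · nlinarith [hsT.1, ht.1]
        · nlinarith [ht.2, hsT.1]
      set w : ℝ → EuclideanSpace ℝ (Fin n) := fun t => r⁻¹ • v (s + r * t) with hwdef
      have hw0 : ‖w 0‖ = 1 := by
        simp only [hwdef, mul_zero, add_zero, norm_smul, norm_inv, Real.norm_eq_abs,
          abs_of_pos hr]
        exact inv_mul_cancel₀ hr.ne'
      have hwsol : IsSolOn D 0 S w := by
        refine ⟨fun t => v' (s + r * t), ?_, ?_, ?_⟩
        · -- integrability
          have h1 : IntervalIntegrable v' volume s (s + r * S) :=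
            hii s hsT (s + r * S) ⟨by nlinarith [hsT.1], hrS⟩
          have h2 := (h1.comp_add_left s).comp_mul_left (c := r)
          simp only [add_sub_cancel_left, sub_self, zero_div] at h2
          rw [mul_comm r S, mul_div_assoc, div_self hr.ne', mul_one] at h2
          exact (intervalIntegrable_iff_integrableOn_Icc_of_le hS.le).mp h2
        · -- a.e. differential inclusion
          have hDw : ∀ t, D (w t) = D (v (s + r * t)) := fun t =>
            hD r⁻¹ (inv_pos.2 hr) _
          rw [ae_iff] at hae ⊢
          rw [Measure.restrict_apply' measurableSet_Icc] at hae ⊢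
          have hsubset : {t | ¬ v' (s + r * t) ∈ D (w t)} ∩ Icc 0 S ⊆
              (fun t => s + r * t) ⁻¹' ({t | ¬ v' t ∈ D (v t)} ∩ Icc 0 T) := by
            rintro t ⟨htbad, htS⟩
            refine ⟨?_, hsub t htS⟩
            simp only [mem_setOf_eq] at htbad ⊢
            rwa [hDw t] at htbad
          exact measure_mono_null hsubset (affine_preimage_null hr.ne' hae)
        · -- integral representation
          intro t ht
          have hst : s + r * t ∈ Icc (0:ℝ) T := hsub t ht
          have hv : v (s + r * t) = v s + ∫ u in s..(s + r * t), v' u :=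
            hdiff s hsT _ hst
          have hcv : (∫ u in (0:ℝ)..t, v' (s + r * u)) =
              r⁻¹ • ∫ u in (s + r * 0)..(s + r * t), v' u :=
            intervalIntegral.integral_comp_add_mul v' hr.ne' s
          simp only [hwdef, mul_zero, add_zero]
          rw [hcv, hv]
          simp only [mul_zero, add_zero, smul_add]
      have hwA : w '' Icc 0 S ⊆ A := by
        rintro _ ⟨t, ht, rfl⟩
        exact hcone r⁻¹ (inv_pos.2 hr) _ (hmem _ (hsub t ht))
      have hwS := hdiss S hS w hwsol hwA hw0
      have hvS : ‖v (s + r * S)‖ ≤ r * (1 - a) := by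
        have : ‖w S‖ = r⁻¹ * ‖v (s + r * S)‖ := by
          simp [hwdef, norm_smul, abs_of_pos hr]
        rw [this] at hwS
        calc ‖v (s + r * S)‖ = r * (r⁻¹ * ‖v (s + r * S)‖) := by
              field_simp
          _ ≤ r * (1 - a) := by
              exact mul_le_mul_of_nonneg_left hwS hr.le
      refine ⟨s + r * S, ⟨by nlinarith [hsT.1], hrS⟩, ?_, ?_⟩
      · calc ‖v (s + r * S)‖ ≤ r * (1 - a) := hvS
          _ ≤ (‖v 0‖ * (1 - a) ^ k) * (1 - a) := by
              apply mul_le_mul_of_nonneg_right hnorm (by linarith)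
          _ = ‖v 0‖ * (1 - a) ^ (k + 1) := by ring
      · have h1 : ‖v (s + r * S)‖ * S / a ≤ r * (1 - a) * S / a := by
          exact div_le_div₀ (mul_nonneg (mul_nonneg hr.le (by linarith)) hS.le) (mul_le_mul_of_nonneg_right hvS hS.le) ha0 le_rfl
        have h2 : r * S + r * (1 - a) * S / a = r * S / a := by
          field_simp; ring
        linarith [hinv, h1, h2]
  -- conclusion
  obtain ⟨k, hk⟩ : ∃ k : ℕ, ‖v 0‖ * (1 - a) ^ k < ‖v t₀‖ := by
    rcases eq_or_lt_of_le (norm_nonneg (v 0)) with h | h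
    · exact ⟨0, by rw [← h]; simpa using hc⟩
    · obtain ⟨k, hk⟩ := exists_pow_lt_of_lt_one (div_pos hc h) (by linarith : 1 - a < 1)
      exact ⟨k, by rwa [lt_div_iff₀ h, mul_comm] at hk⟩
  obtain ⟨s, hsT, hnorm, -⟩ := key k
  exact absurd (hmin hsT) (not_le.2 (lt_of_le_of_lt hnorm hk))
end

section
/- (Frictionless decomposition of a sliding frictional force) Let J_n ∈ ℝ^{1×n}, J_t ∈ ℝ^{2×n}, μ > 0, and let d̂ ∈ ℝ² be a unit vector. For any δ > 0 there exist three vectors d₁, d₂, d₃ ∈ ℝ² with ‖dᵢ + μ d̂‖ < δ such that −μ d̂ lies in the interior of hull{d₁, d₂, d₃}; consequently, for every unit vector u ∈ ℝ² sufficiently close to d̂, the vector J_nᵀ − μ J_tᵀ u lies in hull{ J_nᵀ + J_tᵀ d₁, J_nᵀ + J_tᵀ d₂, J_nᵀ + J_tᵀ d₃ }. -/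
/-!
A plane affine basis inside the ball of radius `δ` around `-μ d̂` with `-μ d̂` in the interior of
its hull gives the triangle. Since the interior is open, `-μ u` stays in the hull for `u` near
`d̂`, and the affine map `x ↦ J_nᵀ + J_tᵀ x` carries this membership to the net forces.
-/

open Set Module

theorem exists_small_triangle_mem_interior_convexHull {E : Type*}
    [NormedAddCommGroup E] [NormedSpace ℝ E] (hE : finrank ℝ E = 2) (c : E) {δ : ℝ}
    (hδ : 0 < δ) :
    ∃ d₁ d₂ d₃ : E, dist d₁ c < δ ∧ dist d₂ c < δ ∧ dist d₃ c < δ ∧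
      c ∈ interior (convexHull ℝ {d₁, d₂, d₃}) := by
  have : FiniteDimensional ℝ E := .of_finrank_eq_succ hE
  have hb := exists_mem_interior_convexHull_affineBasis (Metric.ball_mem_nhds c hδ)
  rw [hE] at hb
  obtain ⟨b, hc, hball⟩ := hb
  have hrange : range b = {b 0, b 1, b 2} := by
    ext; simp [Fin.exists_fin_succ, eq_comm]
  have hsmall : ∀ i, dist (b i) c < δ := fun i =>
    hball (subset_convexHull ℝ _ (mem_range_self i))
  exact ⟨b 0, b 1, b 2, hsmall 0, hsmall 1, hsmall 2, hrange ▸ hc⟩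

theorem AffineMap.mem_convexHull_image {E F : Type*} [AddCommGroup E] [Module ℝ E]
    [AddCommGroup F] [Module ℝ F] (f : E →ᵃ[ℝ] F) {s : Set E} {x : E}
    (hx : x ∈ convexHull ℝ s) : f x ∈ convexHull ℝ (f '' s) :=
  f.image_convexHull s ▸ mem_image_of_mem f hx

theorem frictionless_decomposition_general {n : ℕ}
    (jn : EuclideanSpace ℝ (Fin n))
    (Jt : EuclideanSpace ℝ (Fin n) →L[ℝ] EuclideanSpace ℝ (Fin 2))
    (μ : ℝ)
    (dhat : EuclideanSpace ℝ (Fin 2))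
    (δ : ℝ) (hδ : 0 < δ) :
    ∃ d₁ d₂ d₃ : EuclideanSpace ℝ (Fin 2),
      ‖d₁ + μ • dhat‖ < δ ∧ ‖d₂ + μ • dhat‖ < δ ∧ ‖d₃ + μ • dhat‖ < δ ∧
      -(μ • dhat) ∈ interior (convexHull ℝ {d₁, d₂, d₃}) ∧
      ∃ η > (0 : ℝ), ∀ u : EuclideanSpace ℝ (Fin 2), ‖u‖ = 1 → ‖u - dhat‖ < η →
        jn - μ • (ContinuousLinearMap.adjoint Jt) u ∈
          convexHull ℝ {jn + (ContinuousLinearMap.adjoint Jt) d₁,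
                        jn + (ContinuousLinearMap.adjoint Jt) d₂,
                        jn + (ContinuousLinearMap.adjoint Jt) d₃} := by
  obtain ⟨d₁, d₂, d₃, h₁, h₂, h₃, hint⟩ :=
    exists_small_triangle_mem_interior_convexHull finrank_euclideanSpace_fin (-(μ • dhat)) hδ
  simp only [dist_eq_norm, sub_neg_eq_add] at h₁ h₂ h₃
  have hnear : ∀ᶠ u in nhds dhat, -(μ • u) ∈ convexHull ℝ {d₁, d₂, d₃} :=
    (continuous_const_smul μ).neg.continuousAt.eventually_mem (isOpen_interior.mem_nhds hint)
      |>.mono fun _ hu => interior_subset hu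
  obtain ⟨η, hη, hη'⟩ := Metric.eventually_nhds_iff.1 hnear
  refine ⟨d₁, d₂, d₃, h₁, h₂, h₃, hint, η, hη, fun u _ hu => ?_⟩
  let g : EuclideanSpace ℝ (Fin 2) →ᵃ[ℝ] EuclideanSpace ℝ (Fin n) :=
    AffineMap.const ℝ _ jn + (ContinuousLinearMap.adjoint Jt).toLinearMap.toAffineMap
  simpa [g, Set.image_insert_eq, sub_eq_add_neg] using
    g.mem_convexHull_image (hη' (dist_eq_norm u dhat ▸ hu))

/-- Frictionless decomposition of a sliding frictional force (Figure 4 /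
Case 2 of Theorem 5): the force `-μ d̂` can be enclosed in the interior of an
arbitrarily small triangle `hull{d₁,d₂,d₃}`, and consequently the frictional
net force `J_nᵀ - μ J_tᵀ u`, for any unit `u` close enough to `d̂`, lies in the
convex hull of the three frictionless net forces `J_nᵀ + J_tᵀ dᵢ`. -/
theorem frictionless_decomposition {n : ℕ}
    (jn : EuclideanSpace ℝ (Fin n))
    (Jt : EuclideanSpace ℝ (Fin n) →L[ℝ] EuclideanSpace ℝ (Fin 2))
    (μ : ℝ) (hμ : 0 < μ)
    (dhat : EuclideanSpace ℝ (Fin 2)) (hdhat : ‖dhat‖ = 1)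
    (δ : ℝ) (hδ : 0 < δ) :
    ∃ d₁ d₂ d₃ : EuclideanSpace ℝ (Fin 2),
      ‖d₁ + μ • dhat‖ < δ ∧ ‖d₂ + μ • dhat‖ < δ ∧ ‖d₃ + μ • dhat‖ < δ ∧
      -(μ • dhat) ∈ interior (convexHull ℝ {d₁, d₂, d₃}) ∧
      ∃ η > (0 : ℝ), ∀ u : EuclideanSpace ℝ (Fin 2), ‖u‖ = 1 → ‖u - dhat‖ < η →
        jn - μ • (ContinuousLinearMap.adjoint Jt) u ∈
          convexHull ℝ {jn + (ContinuousLinearMap.adjoint Jt) d₁,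
                        jn + (ContinuousLinearMap.adjoint Jt) d₂,
                        jn + (ContinuousLinearMap.adjoint Jt) d₃} :=
  frictionless_decomposition_general jn Jt μ dhat δ hδ
end
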